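/- arXiv:2503.00270 — 5 statements merged into one kernel-verified Lean document; each statement's English description precedes it below -/
import Mathlib

section
/- Let f : ℝ → ℝ be a smooth 2π-periodic function with f(θ) > 0 for all θ, and suppose ∫₀^{2π} e^{-ikθ} f(θ) dθ = 0 for every integer k with |k| ≥ 3. Then there exists a polynomial p ∈ ℂ[X] of degree at most 2, with p(z) ≠ 0 for every z ∈ ℂ with |z| ≤ 1, such that f(θ) = |p(e^{iθ})|² for all θ ∈ ℝ. -/
open Complex Polynomial

noncomputable section

lemma conj_intervalIntegral (g : ℝ → ℂ) (a b : ℝ) :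
    (starRingEnd ℂ) (∫ x in a..b, g x) = ∫ x in a..b, (starRingEnd ℂ) (g x) := by
  rw [intervalIntegral, intervalIntegral, map_sub, ← integral_conj, ← integral_conj]

lemma stageA (f : ℝ → ℝ)
    (hf : ContDiff ℝ (⊤ : ℕ∞) f) (hper : Function.Periodic f (2 * Real.pi))
    (hfourier : ∀ k : ℤ, 3 ≤ |k| →
      ∫ θ in (0:ℝ)..(2 * Real.pi),
        Complex.exp (-Complex.I * k * θ) * (f θ : ℂ) = 0) :
    ∃ c : ℤ → ℂ, (∀ k, c (-k) = starRingEnd ℂ (c k)) ∧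
      ∀ θ : ℝ, (f θ : ℂ) = ∑ k ∈ Finset.Icc (-2:ℤ) 2,
        c k * Complex.exp (Complex.I * k * θ) := by
  haveI : Fact (0 < 2 * Real.pi) := ⟨Real.two_pi_pos⟩
  have hperC : Function.Periodic (fun θ : ℝ => (f θ : ℂ)) (2 * Real.pi) := by
    intro x; simp [hper x]
  have hFcont : Continuous hperC.lift :=
    Continuous.quotient_liftOn' (by exact_mod_cast (Complex.continuous_ofReal.comp hf.continuous)) _
  set F : C(AddCircle (2 * Real.pi), ℂ) := ⟨hperC.lift, hFcont⟩ with hF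
  -- fourier evaluated at real points
  have hfour : ∀ (n : ℤ) (x : ℝ), (fourier n (x : AddCircle (2 * Real.pi)) : ℂ)
      = Complex.exp (Complex.I * n * x) := by
    intro n x
    rw [fourier_coe_apply]
    congr 1
    have : (2 * Real.pi : ℂ) ≠ 0 := by
      simpa using Real.pi_ne_zero
    field_simp
    push_cast
    ring
  -- coefficient formula
  have hcoeff : ∀ n : ℤ, fourierCoeff (F : AddCircle (2 * Real.pi) → ℂ) n
      = (1 / (2 * Real.pi) : ℝ) •
        ∫ x in (0:ℝ)..(2 * Real.pi), Complex.exp (-Complex.I * n * x) * (f x : ℂ) := by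
    intro n
    rw [fourierCoeff_eq_intervalIntegral _ n 0, zero_add]
    congr 1
    apply intervalIntegral.integral_congr
    intro x hx
    simp only [smul_eq_mul]
    rw [hfour (-n) x]
    congr 1
    push_cast
    ring
  -- vanishing
  have hvan : ∀ n : ℤ, n ∉ Finset.Icc (-2:ℤ) 2 →
      fourierCoeff (F : AddCircle (2 * Real.pi) → ℂ) n = 0 := by
    intro n hn
    rw [hcoeff n, hfourier n ?_, smul_zero]
    simp only [Finset.mem_Icc, not_and_or, not_le] at hn
    rcases hn with h | h
    · rw [abs_of_neg (by omega)]; omega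
    · rw [abs_of_pos (by omega)]; omega
  have hsummable : Summable (fourierCoeff (F : AddCircle (2 * Real.pi) → ℂ)) :=
    summable_of_ne_finset_zero hvan
  refine ⟨fourierCoeff (F : AddCircle (2 * Real.pi) → ℂ), ?_, ?_⟩
  · -- reality
    intro k
    rw [hcoeff, hcoeff, Complex.real_smul, Complex.real_smul, map_mul, Complex.conj_ofReal,
      conj_intervalIntegral]
    congr 1
    apply intervalIntegral.integral_congr
    intro x hx
    simp only [map_mul, ← Complex.exp_conj, Complex.conj_ofReal, map_neg, Complex.conj_I,
      map_intCast]
    congr 2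
    push_cast
    ring
  · intro θ
    have h1 := has_pointwise_sum_fourier_series_of_summable hsummable (θ : AddCircle (2 * Real.pi))
    have h2 : HasSum (fun i => fourierCoeff (F : AddCircle (2 * Real.pi) → ℂ) i
        • fourier i (θ : AddCircle (2 * Real.pi)))
        (∑ k ∈ Finset.Icc (-2:ℤ) 2, fourierCoeff (F : AddCircle (2 * Real.pi) → ℂ) k
          • fourier k (θ : AddCircle (2 * Real.pi))) := by
      apply hasSum_sum_of_ne_finset_zero
      intro b hb
      rw [hvan b hb, zero_smul]
    have := h1.unique h2
    have hFθ : F (θ : AddCircle (2 * Real.pi)) = (f θ : ℂ) := rfl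
    rw [hFθ] at this
    rw [this]
    refine Finset.sum_congr rfl fun k _ => ?_
    rw [smul_eq_mul, hfour]

lemma reverse_pow' (p : ℂ[X]) (k : ℕ) : (p ^ k).reverse = p.reverse ^ k := by
  induction k with
  | zero => simp [Polynomial.reverse]
  | succ n ih => rw [pow_succ, pow_succ, Polynomial.reverse_mul_of_domain, ih]

lemma reverse_X_sub_C (a : ℂ) : (X - C a).reverse = 1 + C (-a) * X := by
  have h1 : (X - C a).natDegree = 1 := natDegree_X_sub_C a
  rw [Polynomial.reverse, h1, sub_eq_add_neg, Polynomial.reflect_add]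
  have h2 : Polynomial.reflect 1 (X : ℂ[X]) = 1 := by
    have := Polynomial.reflect_monomial 1 1 (R := ℂ)
    simpa using this
  have h3 : Polynomial.reflect 1 (-(C a) : ℂ[X]) = C (-a) * X := by
    have := Polynomial.reflect_C (-a) 1 (R := ℂ)
    simpa using this
  rw [h2, h3]

lemma rm_le_aux (h : ℂ[X]) (hne : h ≠ 0) (hrev : h = (h.map (starRingEnd ℂ)).reverse)
    (w : ℂ) (hw : w ≠ 0) :
    rootMultiplicity w h ≤ rootMultiplicity ((starRingEnd ℂ) w)⁻¹ h := by
  set k := rootMultiplicity w h with hk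
  have hdvd : (X - C w) ^ k ∣ h := pow_rootMultiplicity_dvd h w
  have hdvd2 : (X - C ((starRingEnd ℂ) w)) ^ k ∣ h.map (starRingEnd ℂ) := by
    have := (Polynomial.map_dvd_map' (starRingEnd ℂ) (x := (X - C w) ^ k) (y := h)).mpr hdvd
    simpa using this
  obtain ⟨q, hq⟩ := hdvd2
  have hrev2 : h = ((X - C ((starRingEnd ℂ) w)) ^ k).reverse * q.reverse := by
    rw [hrev, hq, Polynomial.reverse_mul_of_domain]
  rw [reverse_pow', reverse_X_sub_C] at hrev2
  have hfac : (1 + C (-(starRingEnd ℂ) w) * X)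
      = C (-(starRingEnd ℂ) w) * (X - C (((starRingEnd ℂ) w)⁻¹)) := by
    have hcw : (starRingEnd ℂ) w ≠ 0 := by simpa using hw
    rw [mul_sub, ← C_mul]
    field_simp
    simp only [C_neg, C_1]
    ring
  rw [hfac, mul_pow] at hrev2
  rw [le_rootMultiplicity_iff hne]
  exact ⟨C (-(starRingEnd ℂ) w) ^ k * q.reverse, by rw [hrev2]; ring⟩

lemma rm_eq_aux (h : ℂ[X]) (hne : h ≠ 0) (hrev : h = (h.map (starRingEnd ℂ)).reverse)
    (w : ℂ) (hw : w ≠ 0) :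
    rootMultiplicity ((starRingEnd ℂ) w)⁻¹ h = rootMultiplicity w h := by
  have h1 := rm_le_aux h hne hrev w hw
  have h2 := rm_le_aux h hne hrev ((starRingEnd ℂ) w)⁻¹ (by simpa using hw)
  have hinv : ((starRingEnd ℂ) (((starRingEnd ℂ) w)⁻¹))⁻¹ = w := by
    rw [map_inv₀]; simp
  rw [hinv] at h2
  omega

lemma abs_multiset_prod (t : Multiset ℂ) :
    ‖t.prod‖ = (t.map (‖·‖)).prod := by
  induction t using Multiset.induction_on with
  | empty => simp
  | cons a s ih => simp [ih]

lemma stageB (c : ℤ → ℂ) (hreal : ∀ k, c (-k) = starRingEnd ℂ (c k))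
    (f : ℝ → ℝ) (hpos : ∀ θ : ℝ, 0 < f θ)
    (hsum : ∀ θ : ℝ, (f θ : ℂ) = ∑ k ∈ Finset.Icc (-2:ℤ) 2,
      c k * Complex.exp (Complex.I * k * θ)) :
    ∃ p : Polynomial ℂ, p.natDegree ≤ 2 ∧
      (∀ z : ℂ, ‖z‖ ≤ 1 → p.eval z ≠ 0) ∧
      ∀ θ : ℝ, f θ = (‖p.eval (Complex.exp (Complex.I * θ))‖) ^ 2 := by
  classical
  -- the polynomial g with coefficients c (j - 2)
  set g : ℂ[X] := ∑ j ∈ Finset.range 5, monomial j (c ((j:ℤ) - 2)) with hgdef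
  have hgcoeff : ∀ i : ℕ, g.coeff i = if i ≤ 4 then c ((i:ℤ) - 2) else 0 := by
    intro i
    rw [hgdef, finset_sum_coeff]
    simp only [coeff_monomial]
    rw [Finset.sum_ite_eq' (Finset.range 5) i (fun j => c ((j:ℤ) - 2))]
    simp only [Finset.mem_range]
    split_ifs with h1 h2 h2 <;> first | rfl | omega
  have hIcc : Finset.Icc (-2:ℤ) 2
      = (Finset.range 5).map (⟨fun j : ℕ => (j:ℤ) - 2, show Function.Injective (fun j : ℕ => (j:ℤ) - 2) from by intro x y h; simpa using h⟩ : ℕ ↪ ℤ) := by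
    ext x
    simp only [Finset.mem_Icc, Finset.mem_map, Finset.mem_range, Function.Embedding.coeFn_mk]
    constructor
    · intro hx
      exact ⟨(x + 2).toNat, by omega, by omega⟩
    · rintro ⟨j, hj, rfl⟩
      omega
  have heval : ∀ θ : ℝ, g.eval (Complex.exp (Complex.I * θ))
      = (f θ : ℂ) * Complex.exp (Complex.I * θ) ^ 2 := by
    intro θ
    rw [hsum θ, hIcc, Finset.sum_map, Finset.sum_mul, hgdef, eval_finset_sum]
    refine Finset.sum_congr rfl fun j hj => ?_
    rw [eval_monomial]
    have hzj : Complex.exp (Complex.I * θ) ^ j = Complex.exp ((j:ℂ) * (Complex.I * θ)) :=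
      (Complex.exp_nat_mul _ j).symm
    have hz2 : Complex.exp (Complex.I * θ) ^ 2 = Complex.exp ((2:ℂ) * (Complex.I * θ)) := by
      rw [← Complex.exp_nat_mul]; norm_num
    rw [hzj, hz2, Function.Embedding.coeFn_mk, mul_assoc, ← Complex.exp_add]
    congr 2
    push_cast
    ring
  -- basic facts about g
  have hgne : g ≠ 0 := by
    intro h0
    have h1 := heval 0
    rw [h0] at h1
    simp only [eval_zero] at h1
    have : (f 0 : ℂ) ≠ 0 := Complex.ofReal_ne_zero.mpr (hpos 0).ne'
    rw [Complex.ofReal_zero, mul_zero, Complex.exp_zero, one_pow, mul_one] at h1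
    exact this h1.symm
  have hdeg4 : g.natDegree ≤ 4 := by
    rw [natDegree_le_iff_coeff_eq_zero]
    intro N hN
    rw [hgcoeff, if_neg (by omega)]
  have hcirc : ∀ z : ℂ, ‖z‖ = 1 → g.eval z ≠ 0 := by
    intro z hz
    have hze : z = Complex.exp (Complex.I * z.arg) := by
      conv_lhs => rw [← Complex.norm_mul_exp_arg_mul_I z]
      rw [hz, Complex.ofReal_one, one_mul, mul_comm]
    rw [hze, heval z.arg]
    exact mul_ne_zero (Complex.ofReal_ne_zero.mpr (hpos _).ne')
      (pow_ne_zero _ (Complex.exp_ne_zero _))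
  have hsymg : ∀ j : ℕ, j ≤ 4 → (starRingEnd ℂ) (g.coeff j) = g.coeff (4 - j) := by
    intro j hj
    rw [hgcoeff, hgcoeff, if_pos hj, if_pos (by omega), ← hreal]
    congr 1
    push_cast [Nat.cast_sub hj]
    ring
  -- strip the zero roots
  obtain ⟨m, h, hgh, hh0⟩ : ∃ (m : ℕ) (h : ℂ[X]), X ^ m * h = g ∧ h.eval 0 ≠ 0 := by
    refine ⟨rootMultiplicity 0 g, g /ₘ X ^ rootMultiplicity 0 g, ?_, ?_⟩
    · have h1 := pow_mul_divByMonic_rootMultiplicity_eq g 0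
      rwa [C_0, sub_zero] at h1
    · have h1 := eval_divByMonic_pow_rootMultiplicity_ne_zero 0 hgne
      rwa [C_0, sub_zero] at h1
  have hhne : h ≠ 0 := fun h0 => hh0 (by rw [h0]; simp)
  have hdm : g.natDegree = m + h.natDegree := by
    rw [← hgh, natDegree_mul (pow_ne_zero _ X_ne_zero) hhne, natDegree_X_pow]
  have hcsh : ∀ j : ℕ, g.coeff (j + m) = h.coeff j := by
    intro j
    rw [← hgh, coeff_X_pow_mul]
  have hlow : ∀ j : ℕ, j < m → g.coeff j = 0 := by
    intro j hj
    rw [← hgh, mul_comm, coeff_mul_X_pow', if_neg (by omega)]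
  have hm4 : m ≤ 4 := le_trans (by omega) hdeg4
  -- natDegree g + m = 4
  have hdm4 : g.natDegree + m = 4 := by
    have hld : g.coeff g.natDegree ≠ 0 := by
      rw [← leadingCoeff]; exact leadingCoeff_ne_zero.mpr hgne
    have h1 : g.coeff (4 - g.natDegree) ≠ 0 := by
      rw [← hsymg _ hdeg4]
      simpa using hld
    have h2 : ¬ (4 - g.natDegree < m) := fun hc => h1 (hlow _ hc)
    have h3 : g.coeff m ≠ 0 := by
      have h5 := hcsh 0
      rw [zero_add] at h5
      rw [h5, coeff_zero_eq_eval_zero]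
      exact hh0
    have h4 : g.coeff (4 - m) ≠ 0 := by
      rw [← hsymg _ hm4]
      simpa using h3
    have h5 : 4 - m ≤ g.natDegree := le_natDegree_of_ne_zero h4
    omega
  have hd' : h.natDegree + 2 * m = 4 := by omega
  -- h is self-inversive
  have hsymh : ∀ j : ℕ, j ≤ h.natDegree →
      (starRingEnd ℂ) (h.coeff j) = h.coeff (h.natDegree - j) := by
    intro j hj
    rw [← hcsh j, ← hcsh (h.natDegree - j), hsymg _ (by omega)]
    congr 1
    omega
  have hrevh : h = (h.map (starRingEnd ℂ)).reverse := by
    have hmapdeg : (h.map (starRingEnd ℂ)).natDegree = h.natDegree :=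
      natDegree_map_eq_of_injective (RingHom.injective _) h
    ext i
    rw [Polynomial.coeff_reverse, hmapdeg, coeff_map]
    by_cases hi : i ≤ h.natDegree
    · rw [revAt_le hi]
      have h6 := hsymh (h.natDegree - i) (by omega)
      rw [show h.natDegree - (h.natDegree - i) = i by omega] at h6
      rw [← h6]
    · rw [revAt_eq_self_of_lt (by omega)]
      rw [coeff_eq_zero_of_natDegree_lt (by omega), map_zero]
  have hcirch : ∀ z : ℂ, ‖z‖ = 1 → h.eval z ≠ 0 := by
    intro z hz hz0
    apply hcirc z hz
    rw [← hgh, eval_mul, hz0, mul_zero]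
  -- roots of h
  have hsplits := IsAlgClosed.splits h
  have hcardR : h.roots.card = h.natDegree := (splits_iff_card_roots).mp hsplits
  have hprodR : h = C h.leadingCoeff * (h.roots.map fun r => X - C r).prod :=
    (C_leadingCoeff_mul_prod_multiset_X_sub_C hcardR).symm
  have hRne0 : ∀ r ∈ h.roots, r ≠ 0 := by
    intro r hr h0
    rw [mem_roots hhne] at hr
    rw [h0] at hr
    exact hh0 hr
  have hRnotone : ∀ r ∈ h.roots, ‖r‖ ≠ 1 := by
    intro r hr h1
    rw [mem_roots hhne] at hr
    exact hcirch r h1 hr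
  set ins := h.roots.filter (fun r => ‖r‖ < 1) with hinsdef
  set outs := h.roots.filter (fun r => ¬ ‖r‖ < 1) with houtsdef
  have hins_outs : ins + outs = h.roots := Multiset.filter_add_not _ _
  have houts_gt : ∀ s ∈ outs, 1 < ‖s‖ := by
    intro s hs
    rw [houtsdef, Multiset.mem_filter] at hs
    have h7 := hRnotone s hs.1
    rcases lt_trichotomy (‖s‖) 1 with h8 | h8 | h8
    · exact absurd h8 hs.2
    · exact absurd h8 h7
    · exact h8
  have hins_ne0 : ∀ r ∈ ins, r ≠ 0 := by
    intro r hr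
    rw [hinsdef, Multiset.mem_filter] at hr
    exact hRne0 r hr.1
  -- the involution
  set ι : ℂ → ℂ := fun w => ((starRingEnd ℂ) w)⁻¹ with hιdef
  have hι_inv : Function.Involutive ι := by
    intro w
    simp [hιdef, map_inv₀]
  have hι_abs : ∀ w : ℂ, ‖ι w‖ = (‖w‖)⁻¹ := by
    intro w
    simp [hιdef, map_inv₀]
  have hzero_count : Multiset.count 0 h.roots = 0 := by
    rw [Multiset.count_eq_zero]
    intro h0
    exact hRne0 0 h0 rfl
  -- the pairing of roots
  have hmapio : ins.map ι = outs := by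
    ext s
    have hcnt : Multiset.count s (ins.map ι) = Multiset.count (ι s) ins := by
      conv_lhs => rw [show s = ι (ι s) from (hι_inv s).symm]
      exact Multiset.count_map_eq_count' ι _ hι_inv.injective (ι s)
    rw [hcnt, hinsdef, houtsdef, Multiset.count_filter, Multiset.count_filter]
    by_cases hs0 : s = 0
    · subst hs0
      have hι0 : ι 0 = 0 := by simp [hιdef]
      rw [hι0, hzero_count]
      simp
    · have habs0 : 0 < ‖s‖ := by
        exact norm_pos_iff.mpr hs0
      rcases lt_trichotomy (‖s‖) 1 with hlt | heq | hgt
      · rw [if_neg ?_, if_neg (not_not_intro hlt)]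
        rw [hι_abs, not_lt]
        exact le_of_lt ((one_lt_inv₀ habs0).mpr hlt)
      · rw [if_neg ?_, if_pos (by rw [heq]; norm_num)]
        · rw [Multiset.count_eq_zero.mpr (fun hmem => hRnotone s hmem heq)]
        · rw [hι_abs, heq, not_lt, inv_one]
      · rw [if_pos ?_, if_pos (by push_neg; exact hgt.le)]
        · rw [Polynomial.count_roots, Polynomial.count_roots]
          exact rm_eq_aux h hhne hrevh s hs0
        · rw [hι_abs]
          exact inv_lt_one_of_one_lt₀ hgt
  -- cardinalities
  have hcards : outs.card + outs.card + 2 * m = 4 := by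
    have h1 : ins.card = outs.card := by rw [← hmapio, Multiset.card_map]
    have h2 : ins.card + outs.card = h.roots.card := by
      rw [← hins_outs, Multiset.card_add]
    omega
  -- the constant
  set a := h.leadingCoeff with hadef
  have hane : a ≠ 0 := leadingCoeff_ne_zero.mpr hhne
  set B : ℝ := ‖a‖ * (ins.map (fun r => ‖r‖)).prod with hBdef
  have hBpos : 0 < B := by
    apply mul_pos (norm_pos_iff.mpr hane)
    refine Multiset.prod_induction _ _ (fun x y hx hy => mul_pos hx hy) one_pos ?_
    intro x hx
    rw [Multiset.mem_map] at hx
    obtain ⟨r, hr, rfl⟩ := hx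
    exact norm_pos_iff.mpr (hins_ne0 r hr)
  set b : ℝ := Real.sqrt B with hbdef
  have hb2 : b ^ 2 = B := Real.sq_sqrt hBpos.le
  have hbpos : 0 < b := Real.sqrt_pos.mpr hBpos
  -- the polynomial p
  refine ⟨C (b:ℂ) * (outs.map fun s => X - C s).prod, ?_, ?_, ?_⟩
  · rw [natDegree_C_mul (by exact_mod_cast hbpos.ne'),
      natDegree_multiset_prod_X_sub_C_eq_card]
    omega
  · intro z hz
    rw [eval_mul, eval_C, eval_multiset_prod, Multiset.map_map]
    apply mul_ne_zero (by exact_mod_cast hbpos.ne')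
    apply Multiset.prod_ne_zero
    rw [Multiset.mem_map]
    rintro ⟨s, hs, hs0⟩
    simp only [Function.comp_apply, eval_sub, eval_X, eval_C] at hs0
    have hzs : z = s := by linear_combination hs0
    rw [hzs] at hz
    exact absurd (houts_gt s hs) (not_lt.mpr hz)
  · intro θ
    set z : ℂ := Complex.exp (Complex.I * θ) with hzdef
    have hz1 : ‖z‖ = 1 := by
      rw [hzdef, Complex.norm_exp]
      simp
    -- pointwise pairing step
    have hstep : ∀ r : ℂ, r ≠ 0 →
        ‖z - ι r‖ * ‖r‖ = ‖z - r‖ := by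
      intro r hr
      have hcr : (starRingEnd ℂ) r ≠ 0 := by simpa using hr
      have h1 : (z - ι r) * (starRingEnd ℂ) r = z * (starRingEnd ℂ) r - 1 := by
        rw [hιdef]
        field_simp
      have h2 : (starRingEnd ℂ) z * z = 1 := by
        rw [mul_comm, Complex.mul_conj]
        rw [Complex.normSq_eq_norm_sq, hz1]
        norm_num
      calc ‖z - ι r‖ * ‖r‖
          = ‖z - ι r‖ * ‖(starRingEnd ℂ) r‖ := by
            rw [Complex.norm_conj]
        _ = ‖z * (starRingEnd ℂ) r - 1‖ := by rw [← norm_mul, h1]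
        _ = ‖(starRingEnd ℂ) (z * (starRingEnd ℂ) r - 1)‖ :=
            (Complex.norm_conj _).symm
        _ = ‖(starRingEnd ℂ) z * (r - z)‖ := by
            congr 1
            rw [map_sub, map_mul, Complex.conj_conj, map_one, mul_sub, h2]
        _ = ‖r - z‖ := by rw [norm_mul, Complex.norm_conj, hz1, one_mul]
        _ = ‖z - r‖ := by rw [show r - z = -(z - r) by ring, norm_neg]
    -- |eval of a product of linear factors|
    have eabs : ∀ t : Multiset ℂ,
        ‖((t.map fun s => X - C s).prod).eval z‖
          = (t.map fun s => ‖z - s‖).prod := by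
      intro t
      rw [eval_multiset_prod, Multiset.map_map]
      have h1 : (eval z ∘ fun s : ℂ => X - C s) = fun s : ℂ => z - s := by
        funext s; simp
      rw [h1, abs_multiset_prod, Multiset.map_map]
      rfl
    -- assembling
    have e1 : ‖h.eval z‖
        = ‖a‖ * (h.roots.map fun r => ‖z - r‖).prod := by
      conv_lhs => rw [hprodR]
      rw [eval_mul, eval_C, norm_mul, eabs]
    have e2 : (ins.map fun r => ‖z - r‖).prod
        = (ins.map fun r => ‖r‖).prod
          * (outs.map fun s => ‖z - s‖).prod := by
      rw [← hmapio, Multiset.map_map, ← Multiset.prod_map_mul]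
      apply congrArg
      apply Multiset.map_congr rfl
      intro r hr
      have := hstep r (hins_ne0 r hr)
      simp only [Function.comp_apply]
      rw [mul_comm (‖r‖), this]
    have e3 : (f θ : ℝ) = ‖h.eval z‖ := by
      have h1 : ‖(f θ : ℂ)‖ = f θ := by
        rw [Complex.norm_real, Real.norm_eq_abs, abs_of_pos (hpos θ)]
      have h2 : g.eval z = z ^ m * h.eval z := by rw [← hgh, eval_mul, eval_pow, eval_X]
      have h3 := heval θ
      rw [← hzdef] at h3
      rw [h2] at h3
      have h4 := congrArg (‖·‖) h3
      rw [norm_mul, norm_mul, norm_pow, norm_pow, hz1, one_pow, one_pow, one_mul, mul_one, h1] at h4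
      exact h4.symm
    rw [e3, e1, ← hins_outs, Multiset.map_add, Multiset.prod_add, e2]
    have e4 : ‖(C (b:ℂ) * (outs.map fun s => X - C s).prod).eval z‖
        = b * (outs.map fun s => ‖z - s‖).prod := by
      rw [eval_mul, eval_C, norm_mul, eabs, Complex.norm_real, Real.norm_eq_abs, abs_of_pos hbpos]
    rw [e4, mul_pow, hb2, hBdef]
    ring

/-- If `f : ℝ → ℝ` is a smooth, positive, `2π`-periodic function whose Fourier
coefficients vanish in degrees of absolute value at least `3`, then
`f(θ) = |p(e^{iθ})|²` for a polynomial `p` of degree at most `2` which does not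
vanish on the closed unit disc. -/
theorem positive_fourier_support_two_eq_squared_modulus (f : ℝ → ℝ)
    (hf : ContDiff ℝ (⊤ : ℕ∞) f) (hper : Function.Periodic f (2 * Real.pi))
    (hpos : ∀ θ : ℝ, 0 < f θ)
    (hfourier : ∀ k : ℤ, 3 ≤ |k| →
      ∫ θ in (0:ℝ)..(2 * Real.pi),
        Complex.exp (-Complex.I * k * θ) * (f θ : ℂ) = 0) :
    ∃ p : Polynomial ℂ, p.natDegree ≤ 2 ∧
      (∀ z : ℂ, ‖z‖ ≤ 1 → p.eval z ≠ 0) ∧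
      ∀ θ : ℝ, f θ = ‖p.eval (Complex.exp (Complex.I * θ))‖ ^ 2 := by
  obtain ⟨c, hreal, hsum⟩ := stageA f hf hper hfourier
  exact stageB c hreal f hpos hsum

end
end

section
/- (Analytic core of Proposition 2.6) Let φ : ℝ → ℝ be a smooth 2π-periodic function. Then the following are equivalent: (i) for all integers n and k, ∫₀^{2π} e^{ikθ} e^{-2φ(θ)} ( |n|·(2φ'(θ)² − φ''(θ) − 3 i n φ'(θ) − n²) − |k−n|·(−n² − i n φ'(θ)) ) dθ = 0; (ii) ∫₀^{2π} e^{ikθ} e^{-2φ(θ)} dθ = 0 for every integer k with |k| ≥ 3. -/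
open Complex MeasureTheory intervalIntegral Real

section Aux

variable (φ : ℝ → ℝ)

private lemma periodic_deriv' {f : ℝ → ℝ} {c : ℝ} (h : Function.Periodic f c) :
    Function.Periodic (deriv f) c := by
  intro x
  have h1 : deriv (fun y => f (y + c)) x = deriv f (x + c) := deriv_comp_add_const f c x
  rw [funext h] at h1
  exact h1.symm

private lemma hasDerivAt_e (k : ℤ) (θ : ℝ) :
    HasDerivAt (fun θ : ℝ => Complex.exp (Complex.I * k * θ))
      (Complex.I * k * Complex.exp (Complex.I * k * θ)) θ := by
  have h1 : HasDerivAt (fun θ : ℝ => (Complex.I * k) * (θ : ℂ)) (Complex.I * k) θ := by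
    simpa using (Complex.ofRealCLM.hasDerivAt (x := θ)).const_mul (Complex.I * (k:ℂ))
  simpa [mul_comm] using h1.cexp

private lemma hasDerivAt_psi (hφ : Differentiable ℝ φ) (θ : ℝ) :
    HasDerivAt (fun θ : ℝ => ((Real.exp (-2 * φ θ) : ℝ) : ℂ))
      ((-2 * ((deriv φ θ : ℝ) : ℂ)) * ((Real.exp (-2 * φ θ) : ℝ) : ℂ)) θ := by
  have h0 : HasDerivAt φ (deriv φ θ) θ := (hφ θ).hasDerivAt
  have h1 : HasDerivAt (fun θ : ℝ => Real.exp (-2 * φ θ))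
      ((-2 * deriv φ θ) * Real.exp (-2 * φ θ)) θ := by
    simpa [mul_comm, mul_assoc, mul_left_comm] using (h0.const_mul (-2:ℝ)).exp
  have h2 := h1.ofReal_comp
  push_cast at h2 ⊢
  convert h2 using 1

private lemma exp_boundary (k : ℤ) : Complex.exp (Complex.I * k * ((2 * Real.pi : ℝ) : ℂ)) = 1 := by
  rw [show Complex.I * (k:ℂ) * ((2 * Real.pi : ℝ) : ℂ) = (k:ℂ) * (2 * (Real.pi:ℂ) * Complex.I) by
    push_cast; ring]
  exact Complex.exp_int_mul_two_pi_mul_I k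

end Aux

section Main

variable {φ : ℝ → ℝ}

private lemma smooth_facts (hφ : ContDiff ℝ (⊤ : ℕ∞) φ) :
    Differentiable ℝ φ ∧ Differentiable ℝ (deriv φ) ∧ Continuous (deriv φ)
      ∧ Continuous (deriv (deriv φ)) := by
  have h0 : ContDiff ℝ ((⊤:ℕ∞) : WithTop ℕ∞) φ := hφ.of_le (by simp)
  have h1 : ContDiff ℝ ((⊤:ℕ∞) : WithTop ℕ∞) (deriv φ) := (contDiff_infty_iff_deriv.mp h0).2
  exact ⟨(contDiff_infty_iff_deriv.mp h0).1, (contDiff_infty_iff_deriv.mp h1).1,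
    h1.continuous, (contDiff_infty_iff_deriv.mp h1).2.continuous⟩

private lemma moment1 (hφ : ContDiff ℝ (⊤ : ℕ∞) φ) (hper : Function.Periodic φ (2 * Real.pi)) (k : ℤ) :
    ∫ θ in (0:ℝ)..(2 * Real.pi),
        Complex.exp (Complex.I * k * θ) * ((deriv φ θ : ℝ) : ℂ) * ((Real.exp (-2 * φ θ) : ℝ) : ℂ)
      = Complex.I * k / 2 *
        ∫ θ in (0:ℝ)..(2 * Real.pi),
          Complex.exp (Complex.I * k * θ) * ((Real.exp (-2 * φ θ) : ℝ) : ℂ) := by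
  obtain ⟨hd, hd2, hc1, hc2⟩ := smooth_facts hφ
  have Ce : Continuous fun θ : ℝ => Complex.exp (Complex.I * k * θ) := by fun_prop
  have Cψ : Continuous fun θ : ℝ => ((Real.exp (-2 * φ θ) : ℝ) : ℂ) := by
    have := hφ.continuous; fun_prop
  have Cφ' : Continuous fun θ : ℝ => ((deriv φ θ : ℝ) : ℂ) := Complex.continuous_ofReal.comp hc1
  have hg : ∀ θ ∈ Set.uIcc (0:ℝ) (2 * Real.pi),
      HasDerivAt (fun θ : ℝ => Complex.exp (Complex.I * k * θ) * ((Real.exp (-2 * φ θ) : ℝ) : ℂ))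
        ((Complex.I * k) * (Complex.exp (Complex.I * k * θ) * ((Real.exp (-2 * φ θ) : ℝ) : ℂ))
          + (-2) * (Complex.exp (Complex.I * k * θ) * ((deriv φ θ : ℝ) : ℂ)
              * ((Real.exp (-2 * φ θ) : ℝ) : ℂ))) θ := by
    intro θ _
    have := (hasDerivAt_e k θ).mul (hasDerivAt_psi φ hd θ)
    refine this.congr_deriv ?_
    ring
  have hint : IntervalIntegrable (fun θ : ℝ =>
      (Complex.I * k) * (Complex.exp (Complex.I * k * θ) * ((Real.exp (-2 * φ θ) : ℝ) : ℂ))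
        + (-2) * (Complex.exp (Complex.I * k * θ) * ((deriv φ θ : ℝ) : ℂ)
            * ((Real.exp (-2 * φ θ) : ℝ) : ℂ))) volume 0 (2 * Real.pi) := by
    apply Continuous.intervalIntegrable
    fun_prop
  have h0 := intervalIntegral.integral_eq_sub_of_hasDerivAt hg hint
  have hbd : Complex.exp (Complex.I * k * ((2 * Real.pi : ℝ) : ℂ)) *
        ((Real.exp (-2 * φ (2 * Real.pi)) : ℝ) : ℂ)
      - Complex.exp (Complex.I * k * ((0:ℝ) : ℂ)) * ((Real.exp (-2 * φ 0) : ℝ) : ℂ) = 0 := by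
    rw [exp_boundary, show φ (2 * Real.pi) = φ 0 by simpa using hper 0]
    simp
  rw [hbd] at h0
  rw [intervalIntegral.integral_add (by apply Continuous.intervalIntegrable; fun_prop)
      (by apply Continuous.intervalIntegrable; fun_prop),
    intervalIntegral.integral_const_mul, intervalIntegral.integral_const_mul] at h0
  have h0' : Complex.I * k * (∫ θ in (0:ℝ)..(2 * Real.pi),
      Complex.exp (Complex.I * k * θ) * ((Real.exp (-2 * φ θ) : ℝ) : ℂ))
      + (-2) * (∫ θ in (0:ℝ)..(2 * Real.pi),
          Complex.exp (Complex.I * k * θ) * ((deriv φ θ : ℝ) : ℂ)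
            * ((Real.exp (-2 * φ θ) : ℝ) : ℂ)) = 0 := h0
  linear_combination -h0' / 2

private lemma moment2 (hφ : ContDiff ℝ (⊤ : ℕ∞) φ) (hper : Function.Periodic φ (2 * Real.pi)) (k : ℤ) :
    ∫ θ in (0:ℝ)..(2 * Real.pi),
        Complex.exp (Complex.I * k * θ) *
          ((2 * ((deriv φ θ : ℝ) : ℂ) ^ 2 - ((deriv (deriv φ) θ : ℝ) : ℂ))
            * ((Real.exp (-2 * φ θ) : ℝ) : ℂ))
      = -(k:ℂ) ^ 2 / 2 *
        ∫ θ in (0:ℝ)..(2 * Real.pi),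
          Complex.exp (Complex.I * k * θ) * ((Real.exp (-2 * φ θ) : ℝ) : ℂ) := by
  obtain ⟨hd, hd2, hc1, hc2⟩ := smooth_facts hφ
  have hg : ∀ θ ∈ Set.uIcc (0:ℝ) (2 * Real.pi),
      HasDerivAt (fun θ : ℝ => Complex.exp (Complex.I * k * θ) * ((deriv φ θ : ℝ) : ℂ)
          * ((Real.exp (-2 * φ θ) : ℝ) : ℂ))
        ((Complex.I * k) * (Complex.exp (Complex.I * k * θ) * ((deriv φ θ : ℝ) : ℂ)
            * ((Real.exp (-2 * φ θ) : ℝ) : ℂ))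
          + (-1) * (Complex.exp (Complex.I * k * θ) *
              ((2 * ((deriv φ θ : ℝ) : ℂ) ^ 2 - ((deriv (deriv φ) θ : ℝ) : ℂ))
                * ((Real.exp (-2 * φ θ) : ℝ) : ℂ)))) θ := by
    intro θ _
    have h1 : HasDerivAt (fun θ : ℝ => ((deriv φ θ : ℝ) : ℂ)) (((deriv (deriv φ) θ : ℝ) : ℂ)) θ :=
      ((hd2 θ).hasDerivAt).ofReal_comp
    have := ((hasDerivAt_e k θ).mul h1).mul (hasDerivAt_psi φ hd θ)
    refine this.congr_deriv ?_
    simp only [Pi.mul_apply]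
    ring
  have hint : IntervalIntegrable (fun θ : ℝ =>
      (Complex.I * k) * (Complex.exp (Complex.I * k * θ) * ((deriv φ θ : ℝ) : ℂ)
          * ((Real.exp (-2 * φ θ) : ℝ) : ℂ))
        + (-1) * (Complex.exp (Complex.I * k * θ) *
            ((2 * ((deriv φ θ : ℝ) : ℂ) ^ 2 - ((deriv (deriv φ) θ : ℝ) : ℂ))
              * ((Real.exp (-2 * φ θ) : ℝ) : ℂ)))) volume 0 (2 * Real.pi) := by
    apply Continuous.intervalIntegrable
    have := hφ.continuous; fun_prop
  have h0 := intervalIntegral.integral_eq_sub_of_hasDerivAt hg hint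
  have hbd : Complex.exp (Complex.I * k * ((2 * Real.pi : ℝ) : ℂ)) *
        ((deriv φ (2 * Real.pi) : ℝ) : ℂ) * ((Real.exp (-2 * φ (2 * Real.pi)) : ℝ) : ℂ)
      - Complex.exp (Complex.I * k * ((0:ℝ) : ℂ)) * ((deriv φ 0 : ℝ) : ℂ)
          * ((Real.exp (-2 * φ 0) : ℝ) : ℂ) = 0 := by
    rw [exp_boundary, show φ (2 * Real.pi) = φ 0 by simpa using hper 0,
      show deriv φ (2 * Real.pi) = deriv φ 0 by simpa using periodic_deriv' hper 0]
    simp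
  rw [hbd] at h0
  rw [intervalIntegral.integral_add
      (by apply Continuous.intervalIntegrable; have := hφ.continuous; fun_prop)
      (by apply Continuous.intervalIntegrable; have := hφ.continuous; fun_prop),
    intervalIntegral.integral_const_mul, intervalIntegral.integral_const_mul,
    moment1 hφ hper k] at h0
  have h0' : Complex.I * k * (Complex.I * k / 2 * (∫ θ in (0:ℝ)..(2 * Real.pi),
        Complex.exp (Complex.I * k * θ) * ((Real.exp (-2 * φ θ) : ℝ) : ℂ)))
      + (-1) * (∫ θ in (0:ℝ)..(2 * Real.pi),
          Complex.exp (Complex.I * k * θ) *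
            ((2 * ((deriv φ θ : ℝ) : ℂ) ^ 2 - ((deriv (deriv φ) θ : ℝ) : ℂ))
              * ((Real.exp (-2 * φ θ) : ℝ) : ℂ))) = 0 := h0
  linear_combination -h0' + ((k:ℂ)^2 * (∫ θ in (0:ℝ)..(2 * Real.pi),
      Complex.exp (Complex.I * k * θ) * ((Real.exp (-2 * φ θ) : ℝ) : ℂ)) / 2) * Complex.I_sq

private lemma big_eq (hφ : ContDiff ℝ (⊤ : ℕ∞) φ) (hper : Function.Periodic φ (2 * Real.pi)) (n k : ℤ) :
    (∫ θ in (0:ℝ)..(2 * Real.pi),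
        Complex.exp (Complex.I * k * θ) * (Real.exp (-2 * φ θ) : ℂ) *
          (((|n| : ℤ) : ℂ) *
              (2 * ((deriv φ θ : ℝ) : ℂ) ^ 2 - ((deriv (deriv φ) θ : ℝ) : ℂ)
                - 3 * Complex.I * n * ((deriv φ θ : ℝ) : ℂ) - (n : ℂ) ^ 2)
            - ((|k - n| : ℤ) : ℂ) *
              (-(n : ℂ) ^ 2 - Complex.I * n * ((deriv φ θ : ℝ) : ℂ))))
      = (-(((k - 2 * n) * (|n| * (k - n) + n * |k - n|) : ℤ) : ℂ) / 2) *
        ∫ θ in (0:ℝ)..(2 * Real.pi),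
          Complex.exp (Complex.I * k * θ) * ((Real.exp (-2 * φ θ) : ℝ) : ℂ) := by
  obtain ⟨hd, hd2, hc1, hc2⟩ := smooth_facts hφ
  have hcφ := hφ.continuous
  have hpt : Set.EqOn (fun θ : ℝ =>
      Complex.exp (Complex.I * k * θ) * (Real.exp (-2 * φ θ) : ℂ) *
        (((|n| : ℤ) : ℂ) *
            (2 * ((deriv φ θ : ℝ) : ℂ) ^ 2 - ((deriv (deriv φ) θ : ℝ) : ℂ)
              - 3 * Complex.I * n * ((deriv φ θ : ℝ) : ℂ) - (n : ℂ) ^ 2)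
          - ((|k - n| : ℤ) : ℂ) *
            (-(n : ℂ) ^ 2 - Complex.I * n * ((deriv φ θ : ℝ) : ℂ))))
    (fun θ : ℝ =>
      (((|n| : ℤ) : ℂ)) * (Complex.exp (Complex.I * k * θ) *
          ((2 * ((deriv φ θ : ℝ) : ℂ) ^ 2 - ((deriv (deriv φ) θ : ℝ) : ℂ))
            * ((Real.exp (-2 * φ θ) : ℝ) : ℂ)))
        + (Complex.I * ((n : ℂ) * ((|k - n| : ℤ) : ℂ) - 3 * (n : ℂ) * ((|n| : ℤ) : ℂ))) *
            (Complex.exp (Complex.I * k * θ) * ((deriv φ θ : ℝ) : ℂ)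
              * ((Real.exp (-2 * φ θ) : ℝ) : ℂ))
        + ((n : ℂ) ^ 2 * (((|k - n| : ℤ) : ℂ) - ((|n| : ℤ) : ℂ))) *
            (Complex.exp (Complex.I * k * θ) * ((Real.exp (-2 * φ θ) : ℝ) : ℂ)))
    (Set.uIcc (0:ℝ) (2 * Real.pi)) := fun θ _ => by ring
  rw [intervalIntegral.integral_congr hpt,
    intervalIntegral.integral_add
      (by apply Continuous.intervalIntegrable; fun_prop)
      (by apply Continuous.intervalIntegrable; fun_prop),
    intervalIntegral.integral_add
      (by apply Continuous.intervalIntegrable; fun_prop)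
      (by apply Continuous.intervalIntegrable; fun_prop),
    intervalIntegral.integral_const_mul, intervalIntegral.integral_const_mul,
    intervalIntegral.integral_const_mul, moment1 hφ hper k, moment2 hφ hper k]
  push_cast [-Complex.ofReal_exp]
  linear_combination (((n:ℂ) * ((|k - n| : ℤ) : ℂ) - 3 * (n:ℂ) * ((|n| : ℤ) : ℂ)) * (k:ℂ) *
      (∫ θ in (0:ℝ)..(2 * Real.pi),
        Complex.exp (Complex.I * k * θ) * ((Real.exp (-2 * φ θ) : ℝ) : ℂ)) / 2) * Complex.I_sq

private lemma sign_lemma {n k : ℤ} (h : (k - 2 * n) * (|n| * (k - n) + n * |k - n|) ≠ 0) :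
    3 ≤ |k| := by
  rw [mul_ne_zero_iff] at h
  obtain ⟨h3, h4⟩ := h
  rcases lt_trichotomy n 0 with hn | hn | hn
  · rcases lt_trichotomy (k - n) 0 with hm | hm | hm
    · have h1 : |n| = -n := abs_of_neg hn
      have h2 : |k - n| = -(k - n) := abs_of_neg hm
      refine le_abs.mpr (Or.inr ?_)
      omega
    · exact absurd (by rw [hm]; simp) h4
    · exact absurd (by rw [abs_of_neg hn, abs_of_pos hm]; ring) h4
  · exact absurd (by rw [hn]; simp) h4
  · rcases lt_trichotomy (k - n) 0 with hm | hm | hm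
    · exact absurd (by rw [abs_of_pos hn, abs_of_neg hm]; ring) h4
    · exact absurd (by rw [hm]; simp) h4
    · have h1 : |n| = n := abs_of_pos hn
      have h2 : |k - n| = k - n := abs_of_pos hm
      refine le_abs.mpr (Or.inl ?_)
      omega

end Main


/-- **Analytic core of Proposition 2.6.** For a smooth `2π`-periodic `φ : ℝ → ℝ`,
the family of integral identities coming from the vanishing of the commutator
`[Δ_{∂M}, Λ]` is equivalent to the vanishing of the Fourier coefficients of
`e^{-2φ}` in degrees of absolute value at least `3`. -/
theorem commutator_integrals_iff_fourier_support (φ : ℝ → ℝ)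
    (hφ : ContDiff ℝ (⊤ : ℕ∞) φ) (hper : Function.Periodic φ (2 * Real.pi)) :
    (∀ n k : ℤ,
      ∫ θ in (0:ℝ)..(2 * Real.pi),
        Complex.exp (Complex.I * k * θ) * (Real.exp (-2 * φ θ) : ℂ) *
          (((|n| : ℤ) : ℂ) *
              (2 * ((deriv φ θ : ℝ) : ℂ) ^ 2 - ((deriv (deriv φ) θ : ℝ) : ℂ)
                - 3 * Complex.I * n * ((deriv φ θ : ℝ) : ℂ) - (n : ℂ) ^ 2)
            - ((|k - n| : ℤ) : ℂ) *
              (-(n : ℂ) ^ 2 - Complex.I * n * ((deriv φ θ : ℝ) : ℂ))) = 0)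
    ↔ (∀ k : ℤ, 3 ≤ |k| →
        ∫ θ in (0:ℝ)..(2 * Real.pi),
          Complex.exp (Complex.I * k * θ) * (Real.exp (-2 * φ θ) : ℂ) = 0) := by
  constructor
  · intro h k hk
    rcases le_abs.mp hk with hk3 | hk3
    · -- k ≥ 3, take n = 1
      have h1 := h 1 k
      rw [big_eq hφ hper 1 k] at h1
      have hA : (k - 2 * 1) * (|(1:ℤ)| * (k - 1) + 1 * |k - 1|) ≠ 0 := by
        rw [abs_one, abs_of_pos (by omega : (0:ℤ) < k - 1)]
        have h5 : (0:ℤ) < k - 2 * 1 := by omega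
        have h6 : (0:ℤ) < 1 * (k - 1) + 1 * (k - 1) := by omega
        exact mul_ne_zero (ne_of_gt h5) (ne_of_gt h6)
      rcases mul_eq_zero.mp h1 with hc | hc
      · exact absurd hc (by
          refine div_ne_zero ?_ two_ne_zero
          exact neg_ne_zero.mpr (Int.cast_ne_zero.mpr hA))
      · exact hc
    · -- k ≤ -3, take n = -1
      have h1 := h (-1) k
      rw [big_eq hφ hper (-1) k] at h1
      have hA : (k - 2 * (-1)) * (|(-1:ℤ)| * (k - (-1)) + (-1) * |k - (-1)|) ≠ 0 := by
        have e1 : |(-1:ℤ)| = 1 := by decide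
        have e2 : |k - (-1)| = -(k - (-1)) := abs_of_neg (by omega)
        rw [e1, e2]
        have h5 : k - 2 * (-1) < 0 := by omega
        have h6 : 1 * (k - (-1)) + (-1) * -(k - (-1)) < 0 := by omega
        exact mul_ne_zero (ne_of_lt h5) (ne_of_lt h6)
      rcases mul_eq_zero.mp h1 with hc | hc
      · exact absurd hc (by
          refine div_ne_zero ?_ two_ne_zero
          exact neg_ne_zero.mpr (Int.cast_ne_zero.mpr hA))
      · exact hc
  · intro h n k
    rw [big_eq hφ hper n k]
    by_cases hA : (k - 2 * n) * (|n| * (k - n) + n * |k - n|) = 0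
    · rw [hA]; simp
    · rw [h k (sign_lemma hA), mul_zero]
end

section
/- Let φ : ℝ → ℝ be a smooth 2π-periodic function and let n, k ∈ ℤ. Then ∫₀^{2π} e^{ikθ} e^{-2φ(θ)} ( |n|·(2φ'(θ)² − φ''(θ) − 3 i n φ'(θ) − n²) − |k−n|·(−n² − i n φ'(θ)) ) dθ = ( |n|·(−k²/2 + 3kn/2 − n²) − |k−n|·(−n² + nk/2) ) · ∫₀^{2π} e^{ikθ} e^{-2φ(θ)} dθ. -/
/-- For smooth `2π`-periodic `φ : ℝ → ℝ` and `n, k : ℤ`, the commutator integrand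
integrates to an explicit multiple of the `k`-th Fourier coefficient of `e^{-2φ}`. -/
theorem commutator_integral_eq_coeff_mul (φ : ℝ → ℝ) (hφ : ContDiff ℝ (⊤ : ℕ∞) φ)
    (hper : Function.Periodic φ (2 * Real.pi)) (n k : ℤ) :
    ∫ θ in (0:ℝ)..(2 * Real.pi),
        Complex.exp (Complex.I * k * θ) * (Real.exp (-2 * φ θ) : ℂ) *
          (((|n| : ℤ) : ℂ) *
              (2 * ((deriv φ θ : ℝ) : ℂ) ^ 2 - ((deriv (deriv φ) θ : ℝ) : ℂ)
                - 3 * Complex.I * n * ((deriv φ θ : ℝ) : ℂ) - (n : ℂ) ^ 2)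
            - ((|k - n| : ℤ) : ℂ) *
              (-(n : ℂ) ^ 2 - Complex.I * n * ((deriv φ θ : ℝ) : ℂ)))
      = (((|n| : ℤ) : ℂ) * (-(k : ℂ) ^ 2 / 2 + 3 * k * n / 2 - (n : ℂ) ^ 2)
          - ((|k - n| : ℤ) : ℂ) * (-(n : ℂ) ^ 2 + n * k / 2)) *
        ∫ θ in (0:ℝ)..(2 * Real.pi),
          Complex.exp (Complex.I * k * θ) * (Real.exp (-2 * φ θ) : ℂ) := by
  have hphi : ContDiff ℝ ((⊤ : ℕ∞) : WithTop ℕ∞) φ := hφ.of_le (by simp)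
  have hd1 : Differentiable ℝ φ := hphi.differentiable (by simp)
  have hφ' : ContDiff ℝ ((⊤ : ℕ∞) : WithTop ℕ∞) (deriv φ) := (contDiff_infty_iff_deriv.mp hphi).2
  have hd2 : Differentiable ℝ (deriv φ) := hφ'.differentiable (by simp)
  have cφ : Continuous φ := hphi.continuous
  have cφ' : Continuous (deriv φ) := hφ'.continuous
  have cφ'' : Continuous (deriv (deriv φ)) :=
    ((contDiff_infty_iff_deriv.mp hφ').2).continuous
  set g : ℝ → ℂ := fun θ => Complex.exp (Complex.I * k * θ) * (Real.exp (-2 * φ θ) : ℂ)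
    with hg
  have cg : Continuous g := by fun_prop
  -- derivative of g
  have hgd : ∀ θ : ℝ, HasDerivAt g ((Complex.I * k - 2 * ((deriv φ θ : ℝ) : ℂ)) * g θ) θ := by
    intro θ
    have he : HasDerivAt (fun θ : ℝ => Complex.exp (Complex.I * k * θ))
        (Complex.I * k * Complex.exp (Complex.I * k * θ)) θ := by
      have h1 : HasDerivAt (fun θ : ℝ => Complex.I * k * (θ : ℂ)) (Complex.I * k) θ := by
        simpa using (Complex.ofRealCLM.hasDerivAt (x := θ)).const_mul (Complex.I * k)
      simpa [mul_comm] using h1.cexp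
    have hr : HasDerivAt (fun θ : ℝ => Real.exp (-2 * φ θ))
        (Real.exp (-2 * φ θ) * (-2 * deriv φ θ)) θ :=
      (((hd1 θ).hasDerivAt).const_mul (-2)).exp
    have : HasDerivAt (fun θ : ℝ => Complex.exp (Complex.I * k * θ) * (Real.exp (-2 * φ θ) : ℂ))
        (Complex.I * k * Complex.exp (Complex.I * k * θ) * (Real.exp (-2 * φ θ) : ℂ)
          + Complex.exp (Complex.I * k * θ) * ((Real.exp (-2 * φ θ) * (-2 * deriv φ θ) : ℝ) : ℂ)) θ :=
      he.mul hr.ofReal_comp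
    convert this using 1
    simp only [hg]
    push_cast
    ring
  -- endpoint values
  have hφper : φ (2 * Real.pi) = φ 0 := by simpa using hper 0
  have hφ'per : deriv φ (2 * Real.pi) = deriv φ 0 := by
    have h := deriv_comp_add_const φ (2 * Real.pi) 0
    have h2 : (fun x => φ (x + 2 * Real.pi)) = φ := funext fun x => hper x
    rw [h2] at h
    simpa using h.symm
  have hexpk : Complex.exp (Complex.I * k * ((2 * Real.pi : ℝ) : ℂ)) = 1 := by
    rw [show Complex.I * k * ((2 * Real.pi : ℝ) : ℂ)
        = (k : ℂ) * (2 * (Real.pi : ℂ) * Complex.I) by push_cast; ring]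
    exact Complex.exp_int_mul_two_pi_mul_I k
  have hgper : g (2 * Real.pi) = g 0 := by
    simp only [hg, hφper, hexpk]
    norm_num
  -- the three basic integrals
  set C := ∫ θ in (0:ℝ)..(2 * Real.pi), g θ with hC
  set B := ∫ θ in (0:ℝ)..(2 * Real.pi), ((deriv φ θ : ℝ) : ℂ) * g θ with hB0
  set A := ∫ θ in (0:ℝ)..(2 * Real.pi),
      (2 * ((deriv φ θ : ℝ) : ℂ) ^ 2 - ((deriv (deriv φ) θ : ℝ) : ℂ)) * g θ with hA0
  have iC : IntervalIntegrable g MeasureTheory.volume 0 (2 * Real.pi) :=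
    cg.intervalIntegrable _ _
  have iB : IntervalIntegrable (fun θ => ((deriv φ θ : ℝ) : ℂ) * g θ)
      MeasureTheory.volume 0 (2 * Real.pi) := by
    apply Continuous.intervalIntegrable; fun_prop
  have iA : IntervalIntegrable
      (fun θ => (2 * ((deriv φ θ : ℝ) : ℂ) ^ 2 - ((deriv (deriv φ) θ : ℝ) : ℂ)) * g θ)
      MeasureTheory.volume 0 (2 * Real.pi) := by
    apply Continuous.intervalIntegrable; fun_prop
  -- first integration by parts: ∫ (I k - 2 φ') g = 0
  have h1 : Complex.I * k * C - 2 * B = 0 := by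
    have hint : IntervalIntegrable (fun θ => (Complex.I * k - 2 * ((deriv φ θ : ℝ) : ℂ)) * g θ)
        MeasureTheory.volume 0 (2 * Real.pi) := by
      apply Continuous.intervalIntegrable; fun_prop
    have h0 : (∫ θ in (0:ℝ)..(2 * Real.pi),
        (Complex.I * k - 2 * ((deriv φ θ : ℝ) : ℂ)) * g θ) = 0 := by
      rw [intervalIntegral.integral_eq_sub_of_hasDerivAt (fun θ _ => hgd θ) hint, hgper,
        sub_self]
    have hsplit : (∫ θ in (0:ℝ)..(2 * Real.pi),
        (Complex.I * k - 2 * ((deriv φ θ : ℝ) : ℂ)) * g θ)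
        = Complex.I * k * C - 2 * B := by
      rw [hC, hB0, ← intervalIntegral.integral_const_mul, ← intervalIntegral.integral_const_mul,
        ← intervalIntegral.integral_sub (iC.const_mul _) (iB.const_mul _)]
      apply intervalIntegral.integral_congr
      intro θ _
      ring
    rw [← hsplit, h0]
  have hBval : B = Complex.I * k / 2 * C := by
    field_simp
    linear_combination -h1
  -- second integration by parts with H = φ' · g
  have hAB : A = Complex.I * k * B := by
    have hHd : ∀ θ : ℝ, HasDerivAt (fun θ => ((deriv φ θ : ℝ) : ℂ) * g θ)
        (((deriv (deriv φ) θ : ℝ) : ℂ) * g θ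
          + ((deriv φ θ : ℝ) : ℂ) * ((Complex.I * k - 2 * ((deriv φ θ : ℝ) : ℂ)) * g θ)) θ :=
      fun θ => (((hd2 θ).hasDerivAt).ofReal_comp).mul (hgd θ)
    have hint : IntervalIntegrable (fun θ => ((deriv (deriv φ) θ : ℝ) : ℂ) * g θ
          + ((deriv φ θ : ℝ) : ℂ) * ((Complex.I * k - 2 * ((deriv φ θ : ℝ) : ℂ)) * g θ))
        MeasureTheory.volume 0 (2 * Real.pi) := by
      apply Continuous.intervalIntegrable; fun_prop
    have h0 : (∫ θ in (0:ℝ)..(2 * Real.pi), (((deriv (deriv φ) θ : ℝ) : ℂ) * g θ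
          + ((deriv φ θ : ℝ) : ℂ) * ((Complex.I * k - 2 * ((deriv φ θ : ℝ) : ℂ)) * g θ))) = 0 := by
      rw [intervalIntegral.integral_eq_sub_of_hasDerivAt (fun θ _ => hHd θ) hint, hgper, hφ'per,
        sub_self]
    have hsplit : (∫ θ in (0:ℝ)..(2 * Real.pi), (((deriv (deriv φ) θ : ℝ) : ℂ) * g θ
          + ((deriv φ θ : ℝ) : ℂ) * ((Complex.I * k - 2 * ((deriv φ θ : ℝ) : ℂ)) * g θ)))
        = -A + Complex.I * k * B := by
      rw [hA0, hB0, ← intervalIntegral.integral_const_mul, ← intervalIntegral.integral_neg,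
        ← intervalIntegral.integral_add (Continuous.intervalIntegrable (by fun_prop) _ _)
          (Continuous.intervalIntegrable (by fun_prop) _ _)]
      apply intervalIntegral.integral_congr
      intro θ _
      ring
    rw [hsplit] at h0
    linear_combination -h0
  have hAval : A = -(k : ℂ) ^ 2 / 2 * C := by
    rw [hAB, hBval]
    linear_combination ((k : ℂ) ^ 2 * C / 2) * Complex.I_sq
  -- split the main integral
  have hmain : (∫ θ in (0:ℝ)..(2 * Real.pi),
        Complex.exp (Complex.I * k * θ) * (Real.exp (-2 * φ θ) : ℂ) *
          (((|n| : ℤ) : ℂ) *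
              (2 * ((deriv φ θ : ℝ) : ℂ) ^ 2 - ((deriv (deriv φ) θ : ℝ) : ℂ)
                - 3 * Complex.I * n * ((deriv φ θ : ℝ) : ℂ) - (n : ℂ) ^ 2)
            - ((|k - n| : ℤ) : ℂ) *
              (-(n : ℂ) ^ 2 - Complex.I * n * ((deriv φ θ : ℝ) : ℂ))))
      = ((|n| : ℤ) : ℂ) * A
        + (-3 * Complex.I * n * ((|n| : ℤ) : ℂ) + Complex.I * n * ((|k - n| : ℤ) : ℂ)) * B
        + (-(n : ℂ) ^ 2 * ((|n| : ℤ) : ℂ) + (n : ℂ) ^ 2 * ((|k - n| : ℤ) : ℂ)) * C := by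
    rw [hA0, hB0, hC, ← intervalIntegral.integral_const_mul, ← intervalIntegral.integral_const_mul,
      ← intervalIntegral.integral_const_mul,
      ← intervalIntegral.integral_add (iA.const_mul _) (iB.const_mul _),
      ← intervalIntegral.integral_add ((iA.const_mul _).add (iB.const_mul _)) (iC.const_mul _)]
    apply intervalIntegral.integral_congr
    intro θ _
    simp only [hg]
    ring
  rw [hmain, hAval, hBval]
  linear_combination ((-3 * (n : ℂ) * k / 2 * ((|n| : ℤ) : ℂ)
    + (n : ℂ) * k / 2 * ((|k - n| : ℤ) : ℂ)) * C) * Complex.I_sq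
end

section
/- Let p ∈ ℂ[X] be a polynomial of degree at most 2 with p(z) ≠ 0 for every z in the closed unit disc {z ∈ ℂ : |z| ≤ 1}. Let F : ℂ → ℂ be a function such that for every z in the closed unit disc, F has complex derivative 1/p(z) at z (i.e. HasDerivAt F (p(z))⁻¹ z). Then F is injective on the closed unit disc. -/
open Set Polynomial

/-!
Over `ℂ` a polynomial `p` of degree at most two is `c`, `c (z - a)` or `c (z - a) (z - b)`, and
in each case there is a Möbius map `M`, injective on the disc, with either `M' = k / p`
(`M = z`, and `M = 1 / (z - a)` when `a = b`) or `M' / M = k / p` (`M = z - a`, and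
`M = (z - b) / (z - a)` when `a ≠ b`). Then `M - k F`, resp. `M exp (-k F)`, has derivative
zero on the convex disc, hence is constant, so `F z₁ = F z₂` forces `M z₁ = M z₂`.
-/

section Convex

variable {𝕜 : Type*} [RCLike 𝕜] {s : Set 𝕜}

theorem Convex.apply_eq_of_hasDerivAt_zero {G : Type*} [NormedAddCommGroup G]
    [NormedSpace 𝕜 G] (hs : Convex ℝ s) {g : 𝕜 → G} (hg : ∀ z ∈ s, HasDerivAt g 0 z)
    {x y : 𝕜} (hx : x ∈ s) (hy : y ∈ s) : g x = g y := by
  have h := hs.norm_image_sub_le_of_norm_hasDerivWithin_le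
    (fun z hz => (hg z hz).hasDerivWithinAt) (fun _ _ => norm_zero.le) hx hy
  rw [zero_mul, norm_le_zero_iff, sub_eq_zero] at h
  exact h.symm

theorem Convex.injOn_of_hasDerivAt_const_mul (hs : Convex ℝ s) {F M f : 𝕜 → 𝕜} {k : 𝕜}
    (hF : ∀ z ∈ s, HasDerivAt F (f z) z) (hM : ∀ z ∈ s, HasDerivAt M (k * f z) z)
    (hMinj : InjOn M s) : InjOn F s := by
  intro z₁ h₁ z₂ h₂ hFz
  have hconst : ∀ z ∈ s, HasDerivAt (fun z => M z - k * F z) 0 z := fun z hz =>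
    ((hM z hz).sub ((hF z hz).const_mul k)).congr_deriv (sub_self _)
  have h := hs.apply_eq_of_hasDerivAt_zero hconst h₁ h₂
  simp only [hFz, sub_left_inj] at h
  exact hMinj h₁ h₂ h

end Convex

section Complex

variable {s : Set ℂ} {F : ℂ → ℂ}

theorem Convex.injOn_of_hasDerivAt_const_mul_mul (hs : Convex ℝ s) {M f : ℂ → ℂ} {k : ℂ}
    (hF : ∀ z ∈ s, HasDerivAt F (f z) z) (hM : ∀ z ∈ s, HasDerivAt M (k * f z * M z) z)
    (hMinj : InjOn M s) : InjOn F s := by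
  intro z₁ h₁ z₂ h₂ hFz
  have hconst : ∀ z ∈ s, HasDerivAt (fun z => M z * Complex.exp (-(k * F z))) 0 z :=
    fun z hz => ((hM z hz).mul ((hF z hz).const_mul k).neg.cexp).congr_deriv (by ring)
  have h := hs.apply_eq_of_hasDerivAt_zero hconst h₁ h₂
  simp only [hFz] at h
  exact hMinj h₁ h₂ (mul_right_cancel₀ (Complex.exp_ne_zero _) h)

variable {c a b : ℂ}

theorem Convex.injOn_of_hasDerivAt_inv_const (hs : Convex ℝ s) (hc : c ≠ 0)
    (hF : ∀ z ∈ s, HasDerivAt F c⁻¹ z) : InjOn F s :=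
  hs.injOn_of_hasDerivAt_const_mul (M := id) (k := c) hF
    (fun z _ => by simpa [hc] using hasDerivAt_id z) (injOn_id s)

theorem Convex.injOn_of_hasDerivAt_inv_linear (hs : Convex ℝ s)
    (hp : ∀ z ∈ s, c * (z - a) ≠ 0) (hF : ∀ z ∈ s, HasDerivAt F (c * (z - a))⁻¹ z) :
    InjOn F s :=
  hs.injOn_of_hasDerivAt_const_mul_mul (M := fun z => z - a) (k := c) hF
    (fun z hz => ((hasDerivAt_id' z).sub_const a).congr_deriv
      (by rw [mul_right_comm, mul_inv_cancel₀ (hp z hz)]))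
    (fun _ _ _ _ h => sub_left_injective h)

theorem Convex.injOn_of_hasDerivAt_inv_mul_self (hs : Convex ℝ s)
    (hp : ∀ z ∈ s, c * ((z - a) * (z - a)) ≠ 0)
    (hF : ∀ z ∈ s, HasDerivAt F (c * ((z - a) * (z - a)))⁻¹ z) : InjOn F s := by
  refine hs.injOn_of_hasDerivAt_const_mul (M := fun z => (z - a)⁻¹) (k := -c) hF
    (fun z hz => ?_) (fun _ _ _ _ h => sub_left_injective (inv_injective h))
  obtain ⟨hc, ha⟩ : c ≠ 0 ∧ z - a ≠ 0 := by simpa using hp z hz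
  exact (((hasDerivAt_id' z).sub_const a).inv ha).congr_deriv (by field_simp)

theorem Convex.injOn_of_hasDerivAt_inv_mul_of_ne (hs : Convex ℝ s) (hab : a ≠ b)
    (hp : ∀ z ∈ s, c * ((z - a) * (z - b)) ≠ 0)
    (hF : ∀ z ∈ s, HasDerivAt F (c * ((z - a) * (z - b)))⁻¹ z) : InjOn F s := by
  have ha : ∀ z ∈ s, z - a ≠ 0 := fun z hz =>
    left_ne_zero_of_mul (right_ne_zero_of_mul (hp z hz))
  refine hs.injOn_of_hasDerivAt_const_mul_mul (M := fun z => (z - b) / (z - a))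
    (k := c * (b - a)) hF
    (fun z hz => ?_) (fun z₁ h₁ z₂ h₂ h => ?_)
  · obtain ⟨hc, -, hb⟩ : c ≠ 0 ∧ z - a ≠ 0 ∧ z - b ≠ 0 := by simpa using hp z hz
    refine (((hasDerivAt_id' z).sub_const b).div ((hasDerivAt_id' z).sub_const a)
      (ha z hz)).congr_deriv ?_
    field_simp [ha z hz]
    ring
  · rw [div_eq_div_iff (ha z₁ h₁) (ha z₂ h₂)] at h
    have hmul : (a - b) * (z₁ - z₂) = 0 := by linear_combination -h
    exact sub_eq_zero.1 ((mul_eq_zero.1 hmul).resolve_left (sub_ne_zero.2 hab))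

end Complex

theorem Polynomial.exists_eval_eq_of_natDegree_le_two {K : Type*} [Field K] [IsAlgClosed K]
    {p : K[X]} (hdeg : p.natDegree ≤ 2) :
    (∃ c, ∀ z, p.eval z = c) ∨ (∃ c a, ∀ z, p.eval z = c * (z - a)) ∨
      ∃ c a b, ∀ z, p.eval z = c * ((z - a) * (z - b)) := by
  have hsplit := IsAlgClosed.splits p
  have hcard := splits_iff_card_roots.1 hsplit
  have hprod := hsplit.eq_prod_roots
  set c := p.leadingCoeff
  interval_cases h : p.natDegree
  · rw [Multiset.card_eq_zero.1 hcard] at hprod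
    exact Or.inl ⟨c, fun z => by rw [hprod]; simp⟩
  · obtain ⟨a, ha⟩ := Multiset.card_eq_one.1 hcard
    rw [ha] at hprod
    exact Or.inr (Or.inl ⟨c, a, fun z => by rw [hprod]; simp⟩)
  · obtain ⟨a, b, hab⟩ := Multiset.card_eq_two.1 hcard
    rw [hab] at hprod
    exact Or.inr (Or.inr ⟨c, a, b, fun z => by rw [hprod]; simp⟩)

/-- If `p` is a polynomial of degree at most `2` which does not vanish on the
closed unit disc, then any primitive `F` of `1/p` on the closed unit disc is
injective there. -/
theorem primitive_of_inv_poly_injOn (p : Polynomial ℂ) (hdeg : p.natDegree ≤ 2)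
    (hp : ∀ z ∈ Metric.closedBall (0 : ℂ) 1, p.eval z ≠ 0)
    (F : ℂ → ℂ)
    (hF : ∀ z ∈ Metric.closedBall (0 : ℂ) 1, HasDerivAt F (p.eval z)⁻¹ z) :
    Set.InjOn F (Metric.closedBall (0 : ℂ) 1) := by
  have hs := convex_closedBall (0 : ℂ) 1
  rcases p.exists_eval_eq_of_natDegree_le_two hdeg with
    ⟨c, hc⟩ | ⟨c, a, hc⟩ | ⟨c, a, b, hc⟩ <;> simp only [hc] at hp hF
  · exact hs.injOn_of_hasDerivAt_inv_const (hp 0 (Metric.mem_closedBall_self zero_le_one)) hF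
  · exact hs.injOn_of_hasDerivAt_inv_linear hp hF
  · rcases eq_or_ne a b with rfl | hab
    · exact hs.injOn_of_hasDerivAt_inv_mul_self hp hF
    · exact hs.injOn_of_hasDerivAt_inv_mul_of_ne hab hp hF
end

section
/- Let H > 0 be a real number, and for a nonzero integer m set a(m) = −m·(e^{mH} + e^{−mH})/(e^{mH} − e^{−mH}). Then for every nonzero integer k there exists an integer n with n ≠ 0 and n ≠ k such that a(n)·(−k²/2 + 3kn/2 − n²) − a(k−n)·(−n² + nk/2) ≠ 0. -/
/-!
Writing `x = kH`, the coefficient is `a(m) = -m coth(mH)`, which is even in `m`. Take `n = 2k`: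
the expression becomes `3k³ (coth 2x - coth x)`, and the double-angle formulas give
`coth 2x - coth x = -1 / sinh 2x`, so it equals `-3k³ / sinh 2kH ≠ 0`.
-/

open Real

lemma Real.exp_add_exp_neg_div_exp_sub_exp_neg (y : ℝ) :
    (exp y + exp (-y)) / (exp y - exp (-y)) = cosh y / sinh y := by
  rw [cosh_eq, sinh_eq, div_div_div_cancel_right₀ two_ne_zero]

lemma Real.cosh_two_mul_div_sinh_two_mul {x : ℝ} (hx : x ≠ 0) :
    cosh (2 * x) / sinh (2 * x) = cosh x / sinh x - 1 / sinh (2 * x) := by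
  have hsinh : sinh x ≠ 0 := sinh_ne_zero.mpr hx
  have hcosh : cosh x ≠ 0 := (cosh_pos x).ne'
  rw [cosh_two_mul, sinh_two_mul]
  field_simp
  linear_combination -cosh_sq_sub_sinh_sq x

/-- For `H > 0` and `a(m) = −m (e^{mH} + e^{−mH})/(e^{mH} − e^{−mH})`, for every
nonzero integer `k` there exists `n` with `n ≠ 0`, `n ≠ k` such that
`a(n)(−k²/2 + 3kn/2 − n²) − a(k−n)(−n² + nk/2) ≠ 0`. -/
theorem cylinder_coefficient_nonvanishing (H : ℝ) (hH : 0 < H) (a : ℤ → ℝ)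
    (ha : ∀ m : ℤ, m ≠ 0 →
      a m = -(m : ℝ) * (Real.exp ((m : ℝ) * H) + Real.exp (-((m : ℝ) * H)))
        / (Real.exp ((m : ℝ) * H) - Real.exp (-((m : ℝ) * H)))) :
    ∀ k : ℤ, k ≠ 0 → ∃ n : ℤ, n ≠ 0 ∧ n ≠ k ∧
      a n * (-(k : ℝ) ^ 2 / 2 + 3 * k * n / 2 - (n : ℝ) ^ 2)
        - a (k - n) * (-(n : ℝ) ^ 2 + n * k / 2) ≠ 0 := by
  intro k hk
  refine ⟨2 * k, by omega, by omega, ?_⟩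
  have hk' : (k : ℝ) ≠ 0 := Int.cast_ne_zero.mpr hk
  have hx : (k : ℝ) * H ≠ 0 := mul_ne_zero hk' hH.ne'
  have a_two_mul : a (2 * k) = -(2 * k) * cosh (2 * (k * H)) / sinh (2 * (k * H)) := by
    rw [ha _ (by omega), mul_div_assoc, exp_add_exp_neg_div_exp_sub_exp_neg]
    push_cast
    ring_nf
  have a_neg : a (k - 2 * k) = -k * cosh (k * H) / sinh (k * H) := by
    rw [ha _ (by omega), mul_div_assoc, exp_add_exp_neg_div_exp_sub_exp_neg]
    push_cast
    rw [show ((k : ℝ) - 2 * k) * H = -(k * H) by ring, cosh_neg, sinh_neg]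
    ring
  have value :
      a (2 * k) * (-(k : ℝ) ^ 2 / 2 + 3 * k * ((2 * k : ℤ) : ℝ) / 2 - ((2 * k : ℤ) : ℝ) ^ 2)
        - a (k - 2 * k) * (-((2 * k : ℤ) : ℝ) ^ 2 + ((2 * k : ℤ) : ℝ) * k / 2)
        = -3 * (k : ℝ) ^ 3 / sinh (2 * (k * H)) := by
    rw [a_two_mul, a_neg, mul_div_assoc, cosh_two_mul_div_sinh_two_mul hx]
    push_cast
    ring
  rw [value]
  have : sinh (2 * (k * H)) ≠ 0 := sinh_ne_zero.mpr (mul_ne_zero two_ne_zero hx)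
  positivity
end
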